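/- arXiv:1907.12116 — 3 statements merged into one kernel-verified Lean document; each statement's English description precedes it below -/
import Mathlib

section
/- Let g_n : ℝ^D → ℝ^D for n = 0,…,N, let G(θ, w) := (1/N)(g₀(θ) + Σ_{n=1}^N w_n g_n(θ)), and let θ̂(w) solve G(θ̂(w), w) = 0 with θ̂ := θ̂(1_N). Suppose each g_n is C¹ on a convex open set Ω_θ containing θ̂(w̃) and θ̂, that the Jacobian H(θ, 1_N) := ∂G(θ,1_N)/∂θ satisfies sup_{θ∈Ω_θ} ‖H(θ,1_N)⁻¹‖_op ≤ C_op, and that sup_{θ∈Ω_θ} ‖G(θ, w̃) − G(θ, 1_N)‖₂ ≤ δ₀. Then ‖θ̂(w̃) − θ̂‖₂ ≤ C_op · δ₀. -/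
open scoped BigOperators RealInnerProductSpace

/-!
Restricting `G(·, 1_N)` to the segment from `θ̂` to `θ̂(w̃)` and applying the mean value theorem to
`t ↦ ⟪θ̂(w̃) - θ̂, G(θ̂ + t (θ̂(w̃) - θ̂), 1_N)⟫` turns the coercivity of the Jacobian into
`‖θ̂(w̃) - θ̂‖² / C_op ≤ ⟪θ̂(w̃) - θ̂, G(θ̂(w̃), 1_N)⟫`. Since `G(θ̂(w̃), w̃) = 0`, the right-hand
side is at most `‖θ̂(w̃) - θ̂‖ δ₀` by Cauchy–Schwarz.
-/

section StrongMonotone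

variable {E : Type*} [NormedAddCommGroup E] [InnerProductSpace ℝ E]

theorem Convex.mul_norm_sub_sq_le_inner_sub_of_fderiv {F : E → E} {s : Set E}
    (hs : Convex ℝ s) (hF : ∀ z ∈ s, DifferentiableAt ℝ F z) {c : ℝ}
    (hc : ∀ z ∈ s, ∀ v, c * ‖v‖ ^ 2 ≤ ⟪v, fderiv ℝ F z v⟫) {x y : E} (hx : x ∈ s)
    (hy : y ∈ s) : c * ‖x - y‖ ^ 2 ≤ ⟪x - y, F x - F y⟫ := by
  set v := x - y
  have hmem : ∀ t ∈ Set.Icc (0 : ℝ) 1, y + t • v ∈ s := fun t ht =>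
    hs.add_smul_sub_mem hy hx ht
  have hderiv : ∀ t ∈ Set.Icc (0 : ℝ) 1,
      HasDerivAt (fun r => ⟪v, F (y + r • v)⟫) ⟪v, fderiv ℝ F (y + t • v) v⟫ t := by
    intro t ht
    have hline : HasDerivAt (fun r : ℝ => y + r • v) v t := by
      simpa using ((hasDerivAt_id t).smul_const v).const_add y
    simpa using (hasDerivAt_const t v).inner ℝ
      ((hF _ (hmem t ht)).hasFDerivAt.comp_hasDerivAt t hline)
  obtain ⟨ξ, hξ, hslope⟩ := exists_hasDerivAt_eq_slope _ _ one_pos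
    (fun t ht => (hderiv t ht).continuousAt.continuousWithinAt)
    (fun t ht => hderiv t (Set.mem_Icc_of_Ioo ht))
  have hends : ⟪v, F (y + (1 : ℝ) • v)⟫ - ⟪v, F (y + (0 : ℝ) • v)⟫ = ⟪v, F x - F y⟫ := by
    simp [v, inner_sub_right]
  calc c * ‖v‖ ^ 2 ≤ ⟪v, fderiv ℝ F (y + ξ • v) v⟫ := hc _ (hmem ξ (Set.mem_Icc_of_Ioo hξ)) v
    _ = ⟪v, F x - F y⟫ := by rw [hslope, ← hends]; ring

theorem mul_norm_le_of_mul_norm_sq_le_inner {c : ℝ} {u a : E}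
    (h : c * ‖u‖ ^ 2 ≤ ⟪u, a⟫) : c * ‖u‖ ≤ ‖a‖ := by
  rcases (norm_nonneg u).eq_or_lt with hu | hu
  · rw [← hu, mul_zero]
    exact norm_nonneg a
  · have : ‖u‖ * (c * ‖u‖) ≤ ‖u‖ * ‖a‖ :=
      calc ‖u‖ * (c * ‖u‖) = c * ‖u‖ ^ 2 := by ring
        _ ≤ ⟪u, a⟫ := h
        _ ≤ ‖u‖ * ‖a‖ := real_inner_le_norm u a
    exact le_of_mul_le_mul_left this hu

end StrongMonotone

/-- Theta difference bound: with `G(θ,w) = (1/N)(g₀(θ) + ∑ₙ wₙ gₙ(θ))`, `θ̂(wt)` a zero of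
`G(·,wt)` and `θ̂` a zero of `G(·,1_N)`, both lying in a convex open set `Ω` on which the `gₙ`
are `C¹`, if the Jacobian `H(θ,1_N)` is strongly positive definite with constant `1/C_op`
(so that `‖H(θ,1_N)⁻¹‖_op ≤ C_op`) on `Ω` and `‖G(θ,wt) - G(θ,1_N)‖₂ ≤ δ₀` on `Ω`, then
`‖θ̂(wt) - θ̂‖₂ ≤ C_op δ₀`. -/
theorem stmt7 {D N : ℕ}
    (g₀ : EuclideanSpace ℝ (Fin D) → EuclideanSpace ℝ (Fin D))
    (g : Fin N → EuclideanSpace ℝ (Fin D) → EuclideanSpace ℝ (Fin D))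
    (Ω : Set (EuclideanSpace ℝ (Fin D))) (hΩo : IsOpen Ω) (hΩc : Convex ℝ Ω)
    (wt : Fin N → ℝ) (θt θh : EuclideanSpace ℝ (Fin D)) (hθt : θt ∈ Ω) (hθh : θh ∈ Ω)
    (G : (Fin N → ℝ) → EuclideanSpace ℝ (Fin D) → EuclideanSpace ℝ (Fin D))
    (hGdef : G = fun w θ => (N : ℝ)⁻¹ • (g₀ θ + ∑ n, w n • g n θ))
    (hg₀ : ContDiffOn ℝ 1 g₀ Ω) (hg : ∀ n, ContDiffOn ℝ 1 (g n) Ω)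
    (hroot : G wt θt = 0) (hroot1 : G (fun _ => 1) θh = 0)
    (Cop δ₀ : ℝ) (hCop : 0 < Cop)
    (hH : ∀ θ ∈ Ω, ∀ v : EuclideanSpace ℝ (Fin D),
      ‖v‖ ^ 2 / Cop ≤ ⟪v, fderiv ℝ (G (fun _ => 1)) θ v⟫)
    (hδ : ∀ θ ∈ Ω, ‖G wt θ - G (fun _ => 1) θ‖ ≤ δ₀) :
    ‖θt - θh‖ ≤ Cop * δ₀ := by
  have hsmooth : ContDiffOn ℝ 1 (G fun _ => 1) Ω := by
    simpa [hGdef] using (hg₀.add (ContDiffOn.sum fun n _ => hg n)).const_smul (N : ℝ)⁻¹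
  have hdiff : ∀ θ ∈ Ω, DifferentiableAt ℝ (G fun _ => 1) θ := fun θ hθ =>
    (hsmooth.differentiableOn one_ne_zero θ hθ).differentiableAt (hΩo.mem_nhds hθ)
  have hmono := hΩc.mul_norm_sub_sq_le_inner_sub_of_fderiv hdiff
    (c := Cop⁻¹) (fun θ hθ v => by simpa [div_eq_inv_mul] using hH θ hθ v) hθt hθh
  have hresidual : ‖G (fun _ => 1) θt - G (fun _ => 1) θh‖ ≤ δ₀ := by
    simpa [hroot, hroot1] using hδ θt hθt
  have := (mul_norm_le_of_mul_norm_sq_le_inner hmono).trans hresidual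
  rwa [inv_mul_le_iff₀ hCop] at this
end

section
/- Suppose sup_{θ∈Ω_θ} ‖H(θ,1_N)⁻¹‖_op ≤ C_op, sup over θ ∈ Ω_θ and admissible weights w̃ of ‖H(θ,w̃) − H(θ,1_N)‖₂ is at most δ₁, the Jacobian is M₃-Lipschitz in θ (Frobenius norm), and ‖θ̂(w̃) − θ̂‖₂ ≤ C_op δ₀ for all admissible w̃. If C_op δ₁ + C_op² M₃ δ₀ ≤ δ̊ for some δ̊ ∈ (0,1), then sup over admissible w̃ of ‖H(θ̂(w̃), w̃)⁻¹‖_op ≤ C_op / (1 − δ̊). -/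
/-!
The inverse bound for `H(·, 1_N)` holds on all of `Ω`, in particular at `θ̂(w̃)`. Since the
Frobenius norm dominates the operator norm, `H(θ̂(w̃), w̃)` lies within `δ₁` of the invertible
`H(θ̂(w̃), 1_N)` in operator norm, and `C_op δ₁ ≤ δ̊ < 1`, so a Neumann series inverts it.
-/

open scoped BigOperators

/-- Frobenius norm of a continuous linear map on Euclidean space, via the standard basis. -/
noncomputable def frobCLM {D : ℕ}
    (T : EuclideanSpace ℝ (Fin D) →L[ℝ] EuclideanSpace ℝ (Fin D)) : ℝ :=
  Real.sqrt (∑ i, ∑ j, (T (EuclideanSpace.single j (1:ℝ)) i) ^ 2)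

lemma opNorm_le_frobCLM {D : ℕ}
    (T : EuclideanSpace ℝ (Fin D) →L[ℝ] EuclideanSpace ℝ (Fin D)) : ‖T‖ ≤ frobCLM T := by
  refine T.opNorm_le_bound (Real.sqrt_nonneg _) fun x => ?_
  have hTx : ∀ i, T x i = ∑ j, x j * T (EuclideanSpace.single j 1) i := by
    intro i
    conv_lhs => rw [← (EuclideanSpace.basisFun (Fin D) ℝ).sum_repr x]
    simp
  simp only [EuclideanSpace.norm_eq, Real.norm_eq_abs, sq_abs]
  rw [frobCLM, ← Real.sqrt_mul (by positivity), Finset.sum_mul]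
  refine Real.sqrt_le_sqrt (Finset.sum_le_sum fun i _ => ?_)
  rw [hTx, mul_comm]
  exact Finset.sum_mul_sq_le_sq_mul_sq _ _ _

lemma Units.norm_inv_oneSub_le {R : Type*} [NormedRing R] [CompleteSpace R]
    (h1 : ‖(1 : R)‖ ≤ 1) (t : R) (ht : ‖t‖ < 1) :
    ‖(↑(Units.oneSub t ht)⁻¹ : R)‖ ≤ (1 - ‖t‖)⁻¹ := by
  have := tsum_geometric_le_of_norm_lt_one t ht
  change ‖∑' n : ℕ, t ^ n‖ ≤ _
  linarith

/-- Writing `y = x (1 - t)` with `t = x⁻¹ (x - y)`, the Neumann series inverts `1 - t`. -/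
lemma Units.exists_val_eq_norm_inv_le {R : Type*} [NormedRing R] [CompleteSpace R]
    (h1 : ‖(1 : R)‖ ≤ 1) (x : Rˣ) {y : R} {C ε r : ℝ} (hx : ‖(↑x⁻¹ : R)‖ ≤ C)
    (hyx : ‖y - x‖ ≤ ε) (hr : C * ε ≤ r) (hr1 : r < 1) :
    ∃ u : Rˣ, (u : R) = y ∧ ‖(↑u⁻¹ : R)‖ ≤ C / (1 - r) := by
  set t : R := ↑x⁻¹ * (x - y)
  have hC : 0 ≤ C := (norm_nonneg _).trans hx
  have htr : ‖t‖ ≤ r :=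
    calc ‖t‖ ≤ ‖(↑x⁻¹ : R)‖ * ‖x - y‖ := norm_mul_le _ _
      _ = ‖(↑x⁻¹ : R)‖ * ‖y - x‖ := by rw [norm_sub_rev]
      _ ≤ C * ε := by gcongr
      _ ≤ r := hr
  have ht : ‖t‖ < 1 := htr.trans_lt hr1
  refine ⟨x * Units.oneSub t ht, ?_, ?_⟩
  · simp [t, mul_sub, ← mul_assoc]
  · calc ‖(↑(x * Units.oneSub t ht)⁻¹ : R)‖
        = ‖(↑(Units.oneSub t ht)⁻¹ : R) * ↑x⁻¹‖ := by rw [mul_inv_rev, Units.val_mul]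
      _ ≤ (1 - ‖t‖)⁻¹ * C := by
        have : 0 ≤ (1 - ‖t‖)⁻¹ := inv_nonneg.2 (sub_nonneg.2 ht.le)
        grw [norm_mul_le, Units.norm_inv_oneSub_le h1, hx]
      _ ≤ C / (1 - r) := by
        rw [inv_mul_eq_div]
        gcongr

lemma ContinuousLinearMap.exists_inverse_norm_le_of_norm_sub_le {𝕜 E : Type*}
    [NontriviallyNormedField 𝕜] [NormedAddCommGroup E] [NormedSpace 𝕜 E] [CompleteSpace E]
    {A B D : E →L[𝕜] E} {C ε r : ℝ}
    (hBA : B.comp A = ContinuousLinearMap.id 𝕜 E) (hAB : A.comp B = ContinuousLinearMap.id 𝕜 E)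
    (hB : ‖B‖ ≤ C) (hDA : ‖D - A‖ ≤ ε) (hr : C * ε ≤ r) (hr1 : r < 1) :
    ∃ B' : E →L[𝕜] E, B'.comp D = ContinuousLinearMap.id 𝕜 E ∧
      D.comp B' = ContinuousLinearMap.id 𝕜 E ∧ ‖B'‖ ≤ C / (1 - r) := by
  obtain ⟨u, rfl, hu⟩ :=
    Units.exists_val_eq_norm_inv_le norm_id_le ⟨A, B, hAB, hBA⟩ hB hDA hr hr1
  exact ⟨↑u⁻¹, u.inv_mul, u.mul_inv, hu⟩

theorem stmt9_general {D N : ℕ}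
    (Ω : Set (EuclideanSpace ℝ (Fin D)))
    (H : (Fin N → ℝ) → EuclideanSpace ℝ (Fin D) →
      (EuclideanSpace ℝ (Fin D) →L[ℝ] EuclideanSpace ℝ (Fin D)))
    (Wset : Set (Fin N → ℝ))
    (θhat : (Fin N → ℝ) → EuclideanSpace ℝ (Fin D))
    (hmem : ∀ wt ∈ Wset, θhat wt ∈ Ω)
    (Cop δ₀ δ₁ M₃ δb : ℝ) (hδ₀ : 0 ≤ δ₀) (hM₃ : 0 ≤ M₃)
    (hinv : ∀ θ ∈ Ω, ∃ B : EuclideanSpace ℝ (Fin D) →L[ℝ] EuclideanSpace ℝ (Fin D),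
      B.comp (H (fun _ => 1) θ) = ContinuousLinearMap.id ℝ _ ∧
      (H (fun _ => 1) θ).comp B = ContinuousLinearMap.id ℝ _ ∧ ‖B‖ ≤ Cop)
    (hδ₁ : ∀ wt ∈ Wset, ∀ θ ∈ Ω, frobCLM (H wt θ - H (fun _ => 1) θ) ≤ δ₁)
    (hδb : Cop * δ₁ + Cop ^ 2 * M₃ * δ₀ ≤ δb) (hδb1 : δb < 1) :
    ∀ wt ∈ Wset, ∃ B : EuclideanSpace ℝ (Fin D) →L[ℝ] EuclideanSpace ℝ (Fin D),
      B.comp (H wt (θhat wt)) = ContinuousLinearMap.id ℝ _ ∧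
      (H wt (θhat wt)).comp B = ContinuousLinearMap.id ℝ _ ∧
      ‖B‖ ≤ Cop / (1 - δb) := by
  intro wt hwt
  obtain ⟨B, hBA, hAB, hB⟩ := hinv (θhat wt) (hmem wt hwt)
  have hCopδ₁ : Cop * δ₁ ≤ δb := by
    have : 0 ≤ Cop ^ 2 * M₃ * δ₀ := by positivity
    linarith
  exact ContinuousLinearMap.exists_inverse_norm_le_of_norm_sub_le hBA hAB hB
    ((opNorm_le_frobCLM _).trans (hδ₁ wt hwt _ (hmem wt hwt))) hCopδ₁ hδb1

/-- Invertibility and operator-norm bound for the reweighted Jacobian: with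
`G(θ,w) = (1/N)(g₀(θ) + ∑ₙ wₙ gₙ(θ))`, `H(θ,w)` its Jacobian in `θ`, `θ̂(w̃)` zeros of
`G(·,w̃)` lying in the convex open set `Ω`: if `‖H(θ,1_N)⁻¹‖_op ≤ C_op` on `Ω`,
`‖H(θ,w̃) − H(θ,1_N)‖₂ ≤ δ₁` (Frobenius) for `θ ∈ Ω` and admissible `w̃`, `H(·,1_N)` is
`M₃`-Lipschitz on `Ω` (Frobenius norm), `‖θ̂(w̃) − θ̂(1_N)‖₂ ≤ C_op δ₀`, and
`C_op δ₁ + C_op² M₃ δ₀ ≤ δ̊` for some `δ̊ ∈ (0,1)`, then for every admissible `w̃` the matrix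
`H(θ̂(w̃), w̃)` is invertible with `‖H(θ̂(w̃),w̃)⁻¹‖_op ≤ C_op / (1 − δ̊)`. -/
theorem stmt9 {D N : ℕ}
    (g₀ : EuclideanSpace ℝ (Fin D) → EuclideanSpace ℝ (Fin D))
    (g : Fin N → EuclideanSpace ℝ (Fin D) → EuclideanSpace ℝ (Fin D))
    (Ω : Set (EuclideanSpace ℝ (Fin D))) (hΩo : IsOpen Ω) (hΩc : Convex ℝ Ω)
    (G : (Fin N → ℝ) → EuclideanSpace ℝ (Fin D) → EuclideanSpace ℝ (Fin D))
    (hGdef : G = fun w θ => (N : ℝ)⁻¹ • (g₀ θ + ∑ n, w n • g n θ))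
    (hg₀ : ContDiffOn ℝ 1 g₀ Ω) (hg : ∀ n, ContDiffOn ℝ 1 (g n) Ω)
    (H : (Fin N → ℝ) → EuclideanSpace ℝ (Fin D) →
      (EuclideanSpace ℝ (Fin D) →L[ℝ] EuclideanSpace ℝ (Fin D)))
    (hHdef : H = fun w θ => fderiv ℝ (G w) θ)
    (Wset : Set (Fin N → ℝ))
    (θhat : (Fin N → ℝ) → EuclideanSpace ℝ (Fin D))
    (hmem : ∀ wt ∈ Wset, θhat wt ∈ Ω) (hone : θhat (fun _ => 1) ∈ Ω)
    (hroot : ∀ wt ∈ Wset, G wt (θhat wt) = 0)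
    (hroot1 : G (fun _ => 1) (θhat (fun _ => 1)) = 0)
    (Cop δ₀ δ₁ M₃ δb : ℝ) (hδ₀ : 0 ≤ δ₀) (hM₃ : 0 ≤ M₃)
    (hinv : ∀ θ ∈ Ω, ∃ B : EuclideanSpace ℝ (Fin D) →L[ℝ] EuclideanSpace ℝ (Fin D),
      B.comp (H (fun _ => 1) θ) = ContinuousLinearMap.id ℝ _ ∧
      (H (fun _ => 1) θ).comp B = ContinuousLinearMap.id ℝ _ ∧ ‖B‖ ≤ Cop)
    (hδ₁ : ∀ wt ∈ Wset, ∀ θ ∈ Ω, frobCLM (H wt θ - H (fun _ => 1) θ) ≤ δ₁)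
    (hLip : ∀ θ ∈ Ω, ∀ θ' ∈ Ω,
      frobCLM (H (fun _ => 1) θ - H (fun _ => 1) θ') ≤ M₃ * ‖θ - θ'‖)
    (hdist : ∀ wt ∈ Wset, ‖θhat wt - θhat (fun _ => 1)‖ ≤ Cop * δ₀)
    (hδb : Cop * δ₁ + Cop ^ 2 * M₃ * δ₀ ≤ δb) (hδb0 : 0 < δb) (hδb1 : δb < 1) :
    ∀ wt ∈ Wset, ∃ B : EuclideanSpace ℝ (Fin D) →L[ℝ] EuclideanSpace ℝ (Fin D),
      B.comp (H wt (θhat wt)) = ContinuousLinearMap.id ℝ _ ∧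
      (H wt (θhat wt)).comp B = ContinuousLinearMap.id ℝ _ ∧
      ‖B‖ ≤ Cop / (1 - δb) :=
  stmt9_general Ω H Wset θhat hmem Cop δ₀ δ₁ M₃ δb hδ₀ hM₃ hinv hδ₁ hδb hδb1
end

section
/- Bound on the second implicit directional derivative: with the notation above, assuming ‖dθ̂(w̃)[Δw]‖₂ ≤ C̃_op δ₀, ‖G₂(θ,1_N)‖₂ ≤ M₂, ‖G₂(θ,w̃) − G₂(θ,1_N)‖₂ ≤ δ₂, ‖H(θ,w̃) − H(θ,1_N)‖₂ ≤ δ₁ for all θ ∈ Ω_θ, and ‖H(θ̂(w̃),w̃)⁻¹‖_op ≤ C̃_op, we have ‖d²θ̂(w̃)[Δw,Δw]‖₂ ≤ C̃_op³ M₂ δ₀² + 2 C̃_op² δ₁ δ₀ + C̃_op³ δ₂ δ₀². -/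
open scoped BigOperators

/-!
Along the line `t ↦ w̃ + t Δw`, `Δw = w - 1_N`, the estimating equation is affine in the weights:
`G(w̃ + t Δw, θ) = G(w̃, θ) + t (G(w, θ) - G(1_N, θ))`. Differentiating the root equation
`G(w̃ + t Δw, θ̂(w̃ + t Δw)) = 0` twice at `t = 0` gives
`G₂[dθ̂, dθ̂] + H d²θ̂ + 2 (H(w) - H(1_N)) dθ̂ = 0`,
so `d²θ̂ = -H⁻¹(G₂[dθ̂, dθ̂] + 2 (H(w) - H(1_N)) dθ̂)`. Each term is then bounded by
Cauchy–Schwarz against the Frobenius norms of the coefficient arrays.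
-/

open Filter Topology

section ImplicitDerivative

variable {E F : Type*} [NormedAddCommGroup E] [NormedSpace ℝ E]
  [NormedAddCommGroup F] [NormedSpace ℝ F]

theorem fderiv_fderiv_apply_const {f : E → F} {x : E}
    (hf : DifferentiableAt ℝ (fderiv ℝ f) x) (v w : E) :
    fderiv ℝ (fun y => fderiv ℝ f y v) x w = fderiv ℝ (fderiv ℝ f) x w v := by
  rw [fderiv_clm_apply hf (differentiableAt_const v)]
  simp

theorem HasDerivAt.eq_zero_of_eventuallyEq_zero {f : ℝ → F} {f' : F} {x : ℝ}
    (hf : HasDerivAt f f' x) (h0 : f =ᶠ[𝓝 x] 0) : f' = 0 := by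
  rw [← hf.deriv, h0.deriv_eq, deriv_zero, Pi.zero_apply]

theorem hasDerivAt_fderiv_comp_apply {f : E → F} {θ θ' : ℝ → E} {X : E} {t : ℝ}
    (hf : DifferentiableAt ℝ (fderiv ℝ f) (θ t)) (hθ : HasDerivAt θ (θ' t) t)
    (hθ' : HasDerivAt θ' X t) :
    HasDerivAt (fun s => fderiv ℝ f (θ s) (θ' s))
      (fderiv ℝ (fderiv ℝ f) (θ t) (θ' t) (θ' t) + fderiv ℝ f (θ t) X) t :=
  (hf.hasFDerivAt.comp_hasDerivAt t hθ).clm_apply hθ'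

theorem hasDerivAt_add_smul_comp {A Γ : E → F} {θ : ℝ → E} {θ' : E} {t : ℝ}
    (hA : DifferentiableAt ℝ A (θ t)) (hΓ : DifferentiableAt ℝ Γ (θ t))
    (hθ : HasDerivAt θ θ' t) :
    HasDerivAt (fun s => A (θ s) + s • Γ (θ s))
      (fderiv ℝ A (θ t) θ' + (t • fderiv ℝ Γ (θ t) θ' + Γ (θ t))) t := by
  have hΓθ := hΓ.hasFDerivAt.comp_hasDerivAt t hθ
  have h := (hA.hasFDerivAt.comp_hasDerivAt t hθ).add ((hasDerivAt_id t).smul hΓθ)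
  rwa [id, one_smul] at h

theorem implicit_second_deriv_eq_zero {A Γ : E → F} {θ θ' : ℝ → E} {X : E}
    (hA : ContDiffAt ℝ 2 A (θ 0)) (hΓ : ContDiffAt ℝ 2 Γ (θ 0))
    (hθ : ∀ᶠ t in 𝓝 0, HasDerivAt θ (θ' t) t) (hθ' : HasDerivAt θ' X 0)
    (hroot : ∀ᶠ t in 𝓝 0, A (θ t) + t • Γ (θ t) = 0) :
    fderiv ℝ (fderiv ℝ A) (θ 0) (θ' 0) (θ' 0) + fderiv ℝ A (θ 0) X
      + (2 : ℝ) • fderiv ℝ Γ (θ 0) (θ' 0) = 0 := by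
  have hθc : Tendsto θ (𝓝 0) (𝓝 (θ 0)) := hθ.self_of_nhds.continuousAt.tendsto
  have hdiff : ∀ᶠ t in 𝓝 0, DifferentiableAt ℝ A (θ t) ∧ DifferentiableAt ℝ Γ (θ t) := by
    filter_upwards [hθc.eventually (hA.eventually (by simp)),
      hθc.eventually (hΓ.eventually (by simp))] with t hAt hΓt
    exact ⟨hAt.differentiableAt two_ne_zero, hΓt.differentiableAt two_ne_zero⟩
  have hfirst : (fun t => fderiv ℝ A (θ t) (θ' t)
      + (t • fderiv ℝ Γ (θ t) (θ' t) + Γ (θ t))) =ᶠ[𝓝 0] 0 := by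
    filter_upwards [hθ, hdiff, hroot.eventually_nhds] with t ht hd hzero
    exact (hasDerivAt_add_smul_comp hd.1 hd.2 ht).eq_zero_of_eventuallyEq_zero hzero
  have hA' : DifferentiableAt ℝ (fderiv ℝ A) (θ 0) :=
    (hA.fderiv_right (m := 1) le_rfl).differentiableAt one_ne_zero
  have hΓ' : DifferentiableAt ℝ (fderiv ℝ Γ) (θ 0) :=
    (hΓ.fderiv_right (m := 1) le_rfl).differentiableAt one_ne_zero
  have hsecond := (hasDerivAt_fderiv_comp_apply hA' hθ.self_of_nhds hθ').add
    (((hasDerivAt_id 0).smul (hasDerivAt_fderiv_comp_apply hΓ' hθ.self_of_nhds hθ')).add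
      ((hΓ.differentiableAt two_ne_zero).hasFDerivAt.comp_hasDerivAt 0 hθ.self_of_nhds))
  have h := hsecond.eq_zero_of_eventuallyEq_zero hfirst
  simp only [id, zero_smul, one_smul, zero_add] at h
  rw [← h, two_smul]

theorem implicit_second_deriv_along_line_eq_zero {W : Type*} [NormedAddCommGroup W]
    [NormedSpace ℝ W] {θhat : W → E} {w₀ Δ : W} {A Γ : E → F}
    (hθ : ContDiffAt ℝ 2 θhat w₀) (hA : ContDiffAt ℝ 2 A (θhat w₀))
    (hΓ : ContDiffAt ℝ 2 Γ (θhat w₀))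
    (hroot : ∀ᶠ t : ℝ in 𝓝 0, A (θhat (w₀ + t • Δ)) + t • Γ (θhat (w₀ + t • Δ)) = 0) :
    fderiv ℝ (fderiv ℝ A) (θhat w₀) (fderiv ℝ θhat w₀ Δ) (fderiv ℝ θhat w₀ Δ)
      + fderiv ℝ A (θhat w₀) (fderiv ℝ (fun w => fderiv ℝ θhat w Δ) w₀ Δ)
      + (2 : ℝ) • fderiv ℝ Γ (θhat w₀) (fderiv ℝ θhat w₀ Δ) = 0 := by
  have hline : ∀ t : ℝ, HasDerivAt (fun s : ℝ => w₀ + s • Δ) Δ t := fun t => by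
    simpa using ((hasDerivAt_id t).smul_const Δ).const_add w₀
  have hline0 : w₀ + (0 : ℝ) • Δ = w₀ := by rw [zero_smul, add_zero]
  have hθline : ∀ᶠ t : ℝ in 𝓝 0,
      HasDerivAt (fun s => θhat (w₀ + s • Δ)) (fderiv ℝ θhat (w₀ + t • Δ) Δ) t := by
    have hcont : Tendsto (fun s : ℝ => w₀ + s • Δ) (𝓝 0) (𝓝 w₀) := by
      simpa using (hline 0).continuousAt.tendsto
    filter_upwards [hcont.eventually (hθ.eventually (by simp))] with t ht
    exact (ht.differentiableAt two_ne_zero).hasFDerivAt.comp_hasDerivAt t (hline t)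
  have hθline' : HasDerivAt (fun s : ℝ => fderiv ℝ θhat (w₀ + s • Δ) Δ)
      (fderiv ℝ (fun w => fderiv ℝ θhat w Δ) w₀ Δ) 0 :=
    (((hθ.fderiv_right (m := 1) le_rfl).differentiableAt one_ne_zero).clm_apply
      (differentiableAt_const Δ)).hasFDerivAt.comp_hasDerivAt_of_eq 0 (hline 0) (by simp)
  have h := implicit_second_deriv_eq_zero (θ := fun s => θhat (w₀ + s • Δ))
    (by rwa [hline0]) (by rwa [hline0]) hθline hθline' hroot
  rwa [hline0] at h

theorem norm_le_of_implicit_identity {L : E →L[ℝ] F} {B : F →L[ℝ] E} {C : ℝ}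
    (hBL : B.comp L = ContinuousLinearMap.id ℝ E) (hB : ‖B‖ ≤ C)
    {T : E →L[ℝ] E →L[ℝ] F} {Γ' : E →L[ℝ] F} {d X : E} (h : T d d + L X + (2 : ℝ) • Γ' d = 0)
    {K δ r : ℝ} (hK : 0 ≤ K) (hδ : 0 ≤ δ) (hT : ‖T d d‖ ≤ K * ‖d‖ ^ 2) (hΓ : ‖Γ' d‖ ≤ δ * ‖d‖)
    (hd : ‖d‖ ≤ r) :
    ‖X‖ ≤ C * (K * r ^ 2 + 2 * (δ * r)) := by
  have hLX : L X = -(T d d + (2 : ℝ) • Γ' d) :=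
    eq_neg_of_add_eq_zero_left (by rw [← h]; abel)
  have hX : X = -B (T d d + (2 : ℝ) • Γ' d) := by
    rw [← map_neg, ← hLX, ← ContinuousLinearMap.comp_apply, hBL, ContinuousLinearMap.id_apply]
  calc ‖X‖ ≤ ‖B‖ * ‖T d d + (2 : ℝ) • Γ' d‖ := by rw [hX, norm_neg]; exact B.le_opNorm _
    _ ≤ ‖B‖ * (‖T d d‖ + 2 * ‖Γ' d‖) := by
        gcongr
        refine (norm_add_le _ _).trans_eq ?_
        rw [norm_smul, Real.norm_two]
    _ ≤ C * (K * r ^ 2 + 2 * (δ * r)) := by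
        have hC : 0 ≤ C := (norm_nonneg B).trans hB
        gcongr
        · exact hT.trans (by gcongr)
        · exact hΓ.trans (by gcongr)

end ImplicitDerivative

namespace EuclideanSpace

variable {ι κ ν F : Type*} [Fintype ι] [Fintype κ] [Fintype ν]
  [NormedAddCommGroup F] [NormedSpace ℝ F]

theorem sum_smul_single_one [DecidableEq ι] (x : EuclideanSpace ℝ ι) :
    ∑ j, x j • single j (1 : ℝ) = x := by
  simpa using (basisFun ι ℝ).sum_repr x

theorem norm_clm_apply_le [DecidableEq ι] (T : EuclideanSpace ℝ ι →L[ℝ] F)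
    (x : EuclideanSpace ℝ ι) :
    ‖T x‖ ≤ √(∑ j, ‖T (single j 1)‖ ^ 2) * ‖x‖ := by
  calc ‖T x‖ = ‖∑ j, x j • T (single j 1)‖ := by
        simp only [← map_smul, ← map_sum, sum_smul_single_one]
    _ ≤ ∑ j, ‖x j‖ * ‖T (single j 1)‖ := by
        refine (norm_sum_le _ _).trans_eq ?_
        simp only [norm_smul]
    _ ≤ √(∑ j, ‖x j‖ ^ 2) * √(∑ j, ‖T (single j 1)‖ ^ 2) :=
        Real.sum_mul_le_sqrt_mul_sqrt _ _ _
    _ = √(∑ j, ‖T (single j 1)‖ ^ 2) * ‖x‖ := by rw [norm_eq, mul_comm]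

theorem norm_clm_apply_apply_le [DecidableEq ι] [DecidableEq κ]
    (T : EuclideanSpace ℝ ι →L[ℝ] EuclideanSpace ℝ κ →L[ℝ] F)
    (u : EuclideanSpace ℝ ι) (v : EuclideanSpace ℝ κ) :
    ‖T u v‖ ≤ √(∑ j, ∑ l, ‖T (single l 1) (single j 1)‖ ^ 2) * (‖u‖ * ‖v‖) := by
  have hcol : ∀ j, ‖T u (single j 1)‖ ^ 2 ≤ (∑ l, ‖T (single l 1) (single j 1)‖ ^ 2) * ‖u‖ ^ 2 :=
    fun j => by
      have h := norm_clm_apply_le (T.flip (single j 1)) u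
      simp only [ContinuousLinearMap.flip_apply] at h
      calc ‖T u (single j 1)‖ ^ 2 ≤ (√(∑ l, ‖T (single l 1) (single j 1)‖ ^ 2) * ‖u‖) ^ 2 := by
            gcongr
        _ = _ := by rw [mul_pow, Real.sq_sqrt (by positivity)]
  calc ‖T u v‖ ≤ √(∑ j, ‖T u (single j 1)‖ ^ 2) * ‖v‖ := norm_clm_apply_le (T u) v
    _ ≤ √((∑ j, ∑ l, ‖T (single l 1) (single j 1)‖ ^ 2) * ‖u‖ ^ 2) * ‖v‖ := by
        rw [Finset.sum_mul]
        gcongr with j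
        exact hcol j
    _ = _ := by rw [Real.sqrt_mul (by positivity), Real.sqrt_sq (norm_nonneg u), mul_assoc]

theorem sum_sum_norm_sq_eq (a : ι → κ → EuclideanSpace ℝ ν) :
    ∑ j, ∑ l, ‖a j l‖ ^ 2 = ∑ i, ∑ j, ∑ l, (a j l) i ^ 2 := by
  simp only [real_norm_sq_eq]
  rw [eq_comm, Finset.sum_comm]
  exact Finset.sum_congr rfl fun j _ => Finset.sum_comm

end EuclideanSpace

theorem norm_apply_le_frobCLM {D : ℕ}
    (T : EuclideanSpace ℝ (Fin D) →L[ℝ] EuclideanSpace ℝ (Fin D)) (x : EuclideanSpace ℝ (Fin D)) :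
    ‖T x‖ ≤ frobCLM T * ‖x‖ := by
  have h : frobCLM T = √(∑ j, ‖T (EuclideanSpace.single j 1)‖ ^ 2) := by
    simp only [frobCLM, EuclideanSpace.real_norm_sq_eq]
    rw [Finset.sum_comm]
  rw [h]
  exact EuclideanSpace.norm_clm_apply_le T x

theorem norm_fderiv_sub_apply_le {D : ℕ} {f g : EuclideanSpace ℝ (Fin D) → EuclideanSpace ℝ (Fin D)}
    {x : EuclideanSpace ℝ (Fin D)} (hf : DifferentiableAt ℝ f x) (hg : DifferentiableAt ℝ g x)
    {δ : ℝ} (hδ : frobCLM (fderiv ℝ f x - fderiv ℝ g x) ≤ δ) (v : EuclideanSpace ℝ (Fin D)) :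
    ‖fderiv ℝ (fun y => f y - g y) x v‖ ≤ δ * ‖v‖ := by
  rw [fderiv_fun_sub hf hg]
  exact (norm_apply_le_frobCLM _ _).trans (by gcongr)

theorem norm_fderiv_fderiv_apply_le {ι κ : Type*} [Fintype ι] [Fintype κ] [DecidableEq ι]
    {f g : EuclideanSpace ℝ ι → EuclideanSpace ℝ κ} {x : EuclideanSpace ℝ ι}
    (hf : DifferentiableAt ℝ (fderiv ℝ f) x) (hg : DifferentiableAt ℝ (fderiv ℝ g) x) {δ M : ℝ}
    (hM : √(∑ i, ∑ j, ∑ l, (fderiv ℝ (fun y => fderiv ℝ g y (EuclideanSpace.single j 1)) x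
      (EuclideanSpace.single l 1) i) ^ 2) ≤ M)
    (hδ : √(∑ i, ∑ j, ∑ l, ((fderiv ℝ (fun y => fderiv ℝ f y (EuclideanSpace.single j 1)) x
        (EuclideanSpace.single l 1)
      - fderiv ℝ (fun y => fderiv ℝ g y (EuclideanSpace.single j 1)) x
        (EuclideanSpace.single l 1)) i) ^ 2) ≤ δ)
    (v : EuclideanSpace ℝ ι) :
    ‖fderiv ℝ (fderiv ℝ f) x v v‖ ≤ (δ + M) * ‖v‖ ^ 2 := by
  set T := fderiv ℝ (fderiv ℝ f) x
  set U := fderiv ℝ (fderiv ℝ g) x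
  have hcoord : ∀ S : EuclideanSpace ℝ ι →L[ℝ] EuclideanSpace ℝ ι →L[ℝ] EuclideanSpace ℝ κ,
      ‖S v v‖ ≤ √(∑ i, ∑ j, ∑ l, (S (EuclideanSpace.single l 1) (EuclideanSpace.single j 1) i) ^ 2)
        * (‖v‖ * ‖v‖) := fun S => by
    rw [← EuclideanSpace.sum_sum_norm_sq_eq]
    exact EuclideanSpace.norm_clm_apply_apply_le S v v
  have hU : √(∑ i, ∑ j, ∑ l, (U (EuclideanSpace.single l 1) (EuclideanSpace.single j 1) i) ^ 2)
      ≤ M := by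
    simpa only [fderiv_fderiv_apply_const hg] using hM
  have hTU : √(∑ i, ∑ j, ∑ l,
      ((T - U) (EuclideanSpace.single l 1) (EuclideanSpace.single j 1) i) ^ 2) ≤ δ := by
    simpa only [fderiv_fderiv_apply_const hf, fderiv_fderiv_apply_const hg,
      sub_apply] using hδ
  calc ‖T v v‖ = ‖(T - U) v v + U v v‖ := by simp
    _ ≤ ‖(T - U) v v‖ + ‖U v v‖ := norm_add_le _ _
    _ ≤ δ * (‖v‖ * ‖v‖) + M * (‖v‖ * ‖v‖) := by
        gcongr
        · exact (hcoord _).trans (by gcongr)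
        · exact (hcoord _).trans (by gcongr)
    _ = (δ + M) * ‖v‖ ^ 2 := by ring

theorem smul_add_sum_smul_add_smul_sub {ι V : Type*} [Fintype ι] [AddCommGroup V] [Module ℝ V]
    (c : ℝ) (a : V) (b : ι → V) (u v v' : ι → ℝ) (t : ℝ) :
    c • (a + ∑ n, (u + t • (v - v')) n • b n)
      = c • (a + ∑ n, u n • b n)
        + t • (c • (a + ∑ n, v n • b n) - c • (a + ∑ n, v' n • b n)) := by
  simp only [Pi.add_apply, Pi.smul_apply, Pi.sub_apply, smul_eq_mul, add_smul, mul_smul,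
    sub_smul, Finset.sum_add_distrib, Finset.sum_sub_distrib, ← Finset.smul_sum]
  module

/-- Bound on the second implicit directional derivative: with
`G(θ,w) = (1/N)(g₀(θ) + ∑ₙ wₙ gₙ(θ))`, `θ̂` the implicit solution with `G(θ̂(w'),w') = 0`
near `w̃`, `H(θ,w)` the `θ`-Jacobian and `G₂(θ,w)` the second `θ`-derivative:
assuming `‖H(θ̂(w̃),w̃)⁻¹‖_op ≤ C̃_op`, `‖dθ̂(w̃)[Δw]‖₂ ≤ C̃_op δ₀`,
`‖G₂(θ̂(w̃),1_N)‖₂ ≤ M₂`, `‖G₂(θ̂(w̃),w̃) − G₂(θ̂(w̃),1_N)‖₂ ≤ δ₂`, and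
`‖H(θ̂(w̃),w) − H(θ̂(w̃),1_N)‖₂ ≤ δ₁` (Frobenius norms), we have
`‖d²θ̂(w̃)[Δw,Δw]‖₂ ≤ C̃_op³ M₂ δ₀² + 2 C̃_op² δ₁ δ₀ + C̃_op³ δ₂ δ₀²`. -/
theorem stmt15 {D N : ℕ}
    (g₀ : EuclideanSpace ℝ (Fin D) → EuclideanSpace ℝ (Fin D))
    (g : Fin N → EuclideanSpace ℝ (Fin D) → EuclideanSpace ℝ (Fin D))
    (Ω : Set (EuclideanSpace ℝ (Fin D))) (hΩo : IsOpen Ω)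
    (G : (Fin N → ℝ) → EuclideanSpace ℝ (Fin D) → EuclideanSpace ℝ (Fin D))
    (hGdef : G = fun w θ => (N : ℝ)⁻¹ • (g₀ θ + ∑ n, w n • g n θ))
    (hg₀ : ContDiffOn ℝ 2 g₀ Ω) (hg : ∀ n, ContDiffOn ℝ 2 (g n) Ω)
    (wt w : Fin N → ℝ)
    (θhat : (Fin N → ℝ) → EuclideanSpace ℝ (Fin D))
    (hmem : θhat wt ∈ Ω)
    (hθ : ContDiffAt ℝ 2 θhat wt)
    (hroot : ∀ᶠ w' in nhds wt, G w' (θhat w') = 0)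
    (Ctop δ₀ δ₁ δ₂ M₂ : ℝ)
    (hinv : ∃ B : EuclideanSpace ℝ (Fin D) →L[ℝ] EuclideanSpace ℝ (Fin D),
      B.comp (fderiv ℝ (G wt) (θhat wt)) = ContinuousLinearMap.id ℝ _ ∧
      (fderiv ℝ (G wt) (θhat wt)).comp B = ContinuousLinearMap.id ℝ _ ∧ ‖B‖ ≤ Ctop)
    (hdθ : ‖fderiv ℝ θhat wt (w - fun _ => 1)‖ ≤ Ctop * δ₀)
    (hM₂ : Real.sqrt (∑ i, ∑ j, ∑ l,
      (fderiv ℝ (fun θ' => fderiv ℝ (G (fun _ => 1)) θ'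
          (EuclideanSpace.single j (1:ℝ))) (θhat wt) (EuclideanSpace.single l (1:ℝ)) i) ^ 2)
        ≤ M₂)
    (hδ₂ : Real.sqrt (∑ i, ∑ j, ∑ l,
      ((fderiv ℝ (fun θ' => fderiv ℝ (G wt) θ'
            (EuclideanSpace.single j (1:ℝ))) (θhat wt) (EuclideanSpace.single l (1:ℝ))
        - fderiv ℝ (fun θ' => fderiv ℝ (G (fun _ => 1)) θ'
            (EuclideanSpace.single j (1:ℝ))) (θhat wt) (EuclideanSpace.single l (1:ℝ))) i) ^ 2)
        ≤ δ₂)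
    (hδ₁ : frobCLM (fderiv ℝ (G w) (θhat wt) - fderiv ℝ (G (fun _ => 1)) (θhat wt)) ≤ δ₁) :
    ‖fderiv ℝ (fun w' => fderiv ℝ θhat w' (w - fun _ => 1)) wt (w - fun _ => 1)‖
      ≤ Ctop ^ 3 * M₂ * δ₀ ^ 2 + 2 * Ctop ^ 2 * δ₁ * δ₀ + Ctop ^ 3 * δ₂ * δ₀ ^ 2 := by
  obtain ⟨B, hBL, -, hB⟩ := hinv
  set Δ : Fin N → ℝ := w - fun _ => 1
  set θ₀ := θhat wt
  have hGsmooth : ∀ w', ContDiffAt ℝ 2 (G w') θ₀ := fun w' => by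
    rw [hGdef]
    exact ((hg₀.add (ContDiffOn.sum fun n _ => (hg n).const_smul (w' n))).const_smul _).contDiffAt
      (hΩo.mem_nhds hmem)
  have hline : ∀ (t : ℝ) θ, G (wt + t • Δ) θ = G wt θ + t • (G w θ - G (fun _ => 1) θ) := by
    intro t θ
    rw [hGdef]
    exact smul_add_sum_smul_add_smul_sub _ _ _ _ _ _ t
  have hrootline : ∀ᶠ t : ℝ in 𝓝 0, G wt (θhat (wt + t • Δ))
      + t • (G w (θhat (wt + t • Δ)) - G (fun _ => 1) (θhat (wt + t • Δ))) = 0 := by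
    have hcont : Tendsto (fun s : ℝ => wt + s • Δ) (𝓝 0) (𝓝 wt) :=
      Continuous.tendsto' (by fun_prop) _ _ (by simp)
    filter_upwards [hcont.eventually hroot] with t ht
    rwa [hline] at ht
  have hsecond := implicit_second_deriv_along_line_eq_zero hθ (hGsmooth wt)
    ((hGsmooth w).sub (hGsmooth fun _ => 1)) hrootline
  have hG' : ∀ w', DifferentiableAt ℝ (fderiv ℝ (G w')) θ₀ := fun w' =>
    ((hGsmooth w').fderiv_right (m := 1) le_rfl).differentiableAt one_ne_zero
  calc _ ≤ Ctop * ((δ₂ + M₂) * (Ctop * δ₀) ^ 2 + 2 * (δ₁ * (Ctop * δ₀))) :=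
        norm_le_of_implicit_identity hBL hB hsecond
          (add_nonneg ((Real.sqrt_nonneg _).trans hδ₂) ((Real.sqrt_nonneg _).trans hM₂))
          ((Real.sqrt_nonneg _).trans hδ₁)
          (norm_fderiv_fderiv_apply_le (hG' wt) (hG' _) hM₂ hδ₂ _)
          (norm_fderiv_sub_apply_le ((hGsmooth w).differentiableAt two_ne_zero)
            ((hGsmooth _).differentiableAt two_ne_zero) hδ₁ _) hdθ
    _ = _ := by ring
end
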